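/- Progress for the effect-annotated type system: assuming all base-type function symbols are total on constants, if ⊢_E C : T in the empty context, then either C reduces to some C', or C = return V for some value V, or C = op(V; x.C') with op ∈ E. -/
import Mathlib


/-! A core calculus with algebraic operations and handlers (de Bruijn style),
following Figures 1–3 of the paper. -/

/-- Effect-annotated types: base types, unit, products, functions
`T →^E T`, and handler types `T ⇒^{E₁,E₂} T`, where an effect signature `E`
is a finite set of operation names (the types of operations being given by a
fixed ambient signature). -/
inductive Ty : Type
  | base : ℕ → Ty
  | unit : Ty
  | prod : Ty → Ty → Ty
  | arrow : Ty → Finset ℕ → Ty → Ty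
  | hand : Ty → Finset ℕ → Finset ℕ → Ty → Ty

mutual
  /-- Values: variables (de Bruijn indices), abstractions, pairs, unit,
  constants, base-type function symbols, and handlers. -/
  inductive Val : Type
    | var : ℕ → Val
    | lam : Comp → Val
    | pair : Val → Val → Val
    | unit : Val
    | const : ℕ → Val
    | fn : ℕ → Val
    | handler : Comp → Clauses → Val

  /-- Computations: `return V`, projections, algebraic operations
  `op(V; x.C)`, `let x = C in C`, applications, and `with V handle C`. -/
  inductive Comp : Type
    | ret : Val → Comp
    | proj : Bool → Val → Comp
    | op : ℕ → Val → Comp → Comp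
    | letin : Comp → Comp → Comp
    | app : Val → Val → Comp
    | handle : Val → Comp → Comp

  /-- Lists of operation clauses `opᵢ(x; k) ↦ Cᵢ` of a handler; in a clause
  body, de Bruijn index 1 is the parameter `x` and index 0 the continuation `k`. -/
  inductive Clauses : Type
    | nil : Clauses
    | cons : ℕ → Comp → Clauses → Clauses
end

/-- Lifting a renaming under a binder. -/
def liftR (ρ : ℕ → ℕ) : ℕ → ℕ
  | 0 => 0
  | n + 1 => ρ n + 1

mutual
  /-- Renaming on values. -/
  def renV (ρ : ℕ → ℕ) : Val → Val
    | .var n => .var (ρ n)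
    | .lam C => .lam (renC (liftR ρ) C)
    | .pair a b => .pair (renV ρ a) (renV ρ b)
    | .unit => .unit
    | .const c => .const c
    | .fn f => .fn f
    | .handler Cr cls => .handler (renC (liftR ρ) Cr) (renCl ρ cls)

  /-- Renaming on computations. -/
  def renC (ρ : ℕ → ℕ) : Comp → Comp
    | .ret V => .ret (renV ρ V)
    | .proj b V => .proj b (renV ρ V)
    | .op o V C => .op o (renV ρ V) (renC (liftR ρ) C)
    | .letin C1 C2 => .letin (renC ρ C1) (renC (liftR ρ) C2)
    | .app V W => .app (renV ρ V) (renV ρ W)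
    | .handle V C => .handle (renV ρ V) (renC ρ C)

  /-- Renaming on clause lists. -/
  def renCl (ρ : ℕ → ℕ) : Clauses → Clauses
    | .nil => .nil
    | .cons o C cls => .cons o (renC (liftR (liftR ρ)) C) (renCl ρ cls)
end

/-- Lifting a substitution under a binder. -/
def liftS (σ : ℕ → Val) : ℕ → Val
  | 0 => .var 0
  | n + 1 => renV Nat.succ (σ n)

mutual
  /-- Substitution on values. -/
  def subV (σ : ℕ → Val) : Val → Val
    | .var n => σ n
    | .lam C => .lam (subC (liftS σ) C)
    | .pair a b => .pair (subV σ a) (subV σ b)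
    | .unit => .unit
    | .const c => .const c
    | .fn f => .fn f
    | .handler Cr cls => .handler (subC (liftS σ) Cr) (subCl σ cls)

  /-- Substitution on computations. -/
  def subC (σ : ℕ → Val) : Comp → Comp
    | .ret V => .ret (subV σ V)
    | .proj b V => .proj b (subV σ V)
    | .op o V C => .op o (subV σ V) (subC (liftS σ) C)
    | .letin C1 C2 => .letin (subC σ C1) (subC (liftS σ) C2)
    | .app V W => .app (subV σ V) (subV σ W)
    | .handle V C => .handle (subV σ V) (subC σ C)

  /-- Substitution on clause lists. -/
  def subCl (σ : ℕ → Val) : Clauses → Clauses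
    | .nil => .nil
    | .cons o C cls => .cons o (subC (liftS (liftS σ)) C) (subCl σ cls)
end

/-- The substitution replacing de Bruijn index 0 by `V`. -/
def sub1 (V : Val) : ℕ → Val
  | 0 => V
  | n + 1 => .var n

/-- Capture-avoiding substitution `C[V/x]` of the value `V` for the most
recently bound variable of the computation `C`. -/
def subst1C (V : Val) (C : Comp) : Comp := subC (sub1 V) C

/-- Look up the clause for operation `o` in a handler. -/
def lookupCl (o : ℕ) : Clauses → Option Comp
  | .nil => none
  | .cons o' C cls => if o = o' then some C else lookupCl o cls

/-- A signature: types of operations `op : T_p ⇝ T_a`, base types of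
constants, and types of base-type function symbols. -/
structure Sig : Type where
  op : ℕ → Ty × Ty
  constTy : ℕ → ℕ
  fnTy : ℕ → Ty × Ty

/-- The set of operation names handled by a clause list. -/
def clOps : Clauses → Finset ℕ
  | .nil => ∅
  | .cons o _ cls => insert o (clOps cls)

mutual
  /-- Typing of values (Figure 5). -/
  inductive TyV (S : Sig) : List Ty → Val → Ty → Prop
    | var : ∀ {Γ n T}, Γ[n]? = some T → TyV S Γ (.var n) T
    | lam : ∀ {Γ C T1 T2 E}, TyC S (T1 :: Γ) E C T2 →
        TyV S Γ (.lam C) (.arrow T1 E T2)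
    | pair : ∀ {Γ V1 V2 T1 T2}, TyV S Γ V1 T1 → TyV S Γ V2 T2 →
        TyV S Γ (.pair V1 V2) (.prod T1 T2)
    | unit : ∀ {Γ}, TyV S Γ .unit .unit
    | const : ∀ {Γ c}, TyV S Γ (.const c) (.base (S.constTy c))
    | fn : ∀ {Γ f E}, TyV S Γ (.fn f) (.arrow (S.fnTy f).1 E (S.fnTy f).2)
    | handler : ∀ {Γ Cr cls Tv Tc} (Ef E2 : Finset ℕ), Ef ⊆ E2 →
        TyC S (Tv :: Γ) E2 Cr Tc → TyCl S Γ E2 cls Tc →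
        TyV S Γ (.handler Cr cls) (.hand Tv (clOps cls ∪ Ef) E2 Tc)

  /-- Effect-annotated typing of computations (Figure 5): `Γ ⊢_E C : T`,
  where every operation performed by `C` and left unhandled must be in `E`. -/
  inductive TyC (S : Sig) : List Ty → Finset ℕ → Comp → Ty → Prop
    | ret : ∀ {Γ E V T}, TyV S Γ V T → TyC S Γ E (.ret V) T
    | proj1 : ∀ {Γ E V T1 T2}, TyV S Γ V (.prod T1 T2) →
        TyC S Γ E (.proj true V) T1
    | proj2 : ∀ {Γ E V T1 T2}, TyV S Γ V (.prod T1 T2) →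
        TyC S Γ E (.proj false V) T2
    | op : ∀ {Γ E o V C T}, o ∈ E → TyV S Γ V (S.op o).1 →
        TyC S ((S.op o).2 :: Γ) E C T → TyC S Γ E (.op o V C) T
    | letin : ∀ {Γ E C1 C2 T1 T2}, TyC S Γ E C1 T1 → TyC S (T1 :: Γ) E C2 T2 →
        TyC S Γ E (.letin C1 C2) T2
    | app : ∀ {Γ E V1 V2 T1 T2}, TyV S Γ V1 (.arrow T2 E T1) →
        TyV S Γ V2 T2 → TyC S Γ E (.app V1 V2) T1
    | handle : ∀ {Γ E1 E2 V C T1 T2}, TyV S Γ V (.hand T2 E1 E2 T1) →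
        TyC S Γ E1 C T2 → TyC S Γ E2 (.handle V C) T1

  /-- Typing of handler clauses under the effect set `E₂`: each clause
  `opᵢ(x; k) ↦ Cᵢ` is typed as `Γ, x : Tᵢᵖ, k : Tᵢᵃ →^{E₂} T_c ⊢_{E₂} Cᵢ : T_c`. -/
  inductive TyCl (S : Sig) : List Ty → Finset ℕ → Clauses → Ty → Prop
    | nil : ∀ {Γ E Tc}, TyCl S Γ E .nil Tc
    | cons : ∀ {Γ E o C cls Tc},
        TyC S (Ty.arrow (S.op o).2 E Tc :: (S.op o).1 :: Γ) E C Tc →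
        TyCl S Γ E cls Tc → TyCl S Γ E (.cons o C cls) Tc
end

/-- The reduction relation of Figure 3, parameterised by the interpretation
`δ` of base-type function symbols on values. -/
inductive Step (δ : ℕ → Val → Option Val) : Comp → Comp → Prop
  | proj1 : ∀ {V1 V2}, Step δ (.proj true (.pair V1 V2)) (.ret V1)
  | proj2 : ∀ {V1 V2}, Step δ (.proj false (.pair V1 V2)) (.ret V2)
  | letStep : ∀ {C1 C1' C2}, Step δ C1 C1' →
      Step δ (.letin C1 C2) (.letin C1' C2)
  | letRet : ∀ {V C2}, Step δ (.letin (.ret V) C2) (subst1C V C2)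
  | letOp : ∀ {o V C1 C2},
      Step δ (.letin (.op o V C1) C2)
        (.op o V (.letin C1 (renC (liftR Nat.succ) C2)))
  | beta : ∀ {C V}, Step δ (.app (.lam C) V) (subst1C V C)
  | fnApp : ∀ {f V V'}, δ f V = some V' → Step δ (.app (.fn f) V) (.ret V')
  | handleStep : ∀ {H C C'}, Step δ C C' →
      Step δ (.handle H C) (.handle H C')
  | handleRet : ∀ {Cr cls V},
      Step δ (.handle (.handler Cr cls) (.ret V)) (subst1C V Cr)
  | handleOpMiss : ∀ {Cr cls o V C}, lookupCl o cls = none →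
      Step δ (.handle (.handler Cr cls) (.op o V C))
        (.op o V (.handle (renV Nat.succ (.handler Cr cls)) C))
  | handleOpHit : ∀ {Cr cls o V C Ci}, lookupCl o cls = some Ci →
      Step δ (.handle (.handler Cr cls) (.op o V C))
        (subst1C V
          (subst1C (.lam (.handle (renV Nat.succ (.handler Cr cls)) C)) Ci))

lemma canon_prod {S V T1 T2} (h : TyV S [] V (.prod T1 T2)) :
    ∃ a b, V = .pair a b := by
  cases h with
  | var h => simp at h
  | pair _ _ => exact ⟨_, _, rfl⟩

lemma canon_arrow {S V T1 E T2} (h : TyV S [] V (.arrow T1 E T2)) :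
    (∃ C, V = .lam C) ∨ (∃ f, V = .fn f ∧ T1 = (S.fnTy f).1) := by
  cases h with
  | var h => simp at h
  | lam _ => exact Or.inl ⟨_, rfl⟩
  | fn => exact Or.inr ⟨_, rfl, rfl⟩

lemma canon_hand {S V T1 E1 E2 T2} (h : TyV S [] V (.hand T1 E1 E2 T2)) :
    ∃ Cr cls, V = .handler Cr cls := by
  cases h with
  | var h => simp at h
  | handler _ _ _ _ _ => exact ⟨_, _, rfl⟩

lemma progress_aux (S : Sig) (δ : ℕ → Val → Option Val)
    (htotal : ∀ f V, TyV S [] V (S.fnTy f).1 → (δ f V).isSome) :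
    ∀ (n : ℕ) (C : Comp), sizeOf C < n → ∀ {E : Finset ℕ} {T : Ty}, TyC S [] E C T →
    (∃ C', Step δ C C') ∨ (∃ V, C = .ret V) ∨
      (∃ o V C', C = .op o V C' ∧ o ∈ E) := by
  intro n
  induction n with
  | zero => intro C hC; omega
  | succ n ih =>
  intro C hC E T h
  match C, h with
  | .ret V, _ => exact Or.inr (Or.inl ⟨V, rfl⟩)
  | .proj b V, h =>
    cases h with
    | proj1 hv =>
      obtain ⟨a, b, rfl⟩ := canon_prod hv
      exact Or.inl ⟨_, Step.proj1⟩
    | proj2 hv =>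
      obtain ⟨a, b, rfl⟩ := canon_prod hv
      exact Or.inl ⟨_, Step.proj2⟩
  | .op o V C, h =>
    cases h with
    | op hE _ _ => exact Or.inr (Or.inr ⟨o, V, C, rfl, hE⟩)
  | .letin C1 C2, h =>
    cases h with
    | letin h1 h2 =>
      have hlt : sizeOf C1 < n := by
        have := Comp.letin.sizeOf_spec C1 C2; omega
      rcases ih C1 hlt h1 with ⟨C1', hs⟩ | ⟨V, rfl⟩ | ⟨o, V, C', rfl, hE⟩
      · exact Or.inl ⟨_, Step.letStep hs⟩
      · exact Or.inl ⟨_, Step.letRet⟩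
      · exact Or.inl ⟨_, Step.letOp⟩
  | .app V W, h =>
    cases h with
    | app h1 h2 =>
      rcases canon_arrow h1 with ⟨C, rfl⟩ | ⟨f, rfl, rfl⟩
      · exact Or.inl ⟨_, Step.beta⟩
      · obtain ⟨V', hV'⟩ := Option.isSome_iff_exists.mp (htotal f W h2)
        exact Or.inl ⟨_, Step.fnApp hV'⟩
  | .handle V C, h =>
    cases h with
    | handle h1 h2 =>
      obtain ⟨Cr, cls, rfl⟩ := canon_hand h1
      have hlt : sizeOf C < n := by
        have := Comp.handle.sizeOf_spec (Val.handler Cr cls) C; omega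
      rcases ih C hlt h2 with ⟨C', hs⟩ | ⟨W, rfl⟩ | ⟨o, W, C', rfl, hE⟩
      · exact Or.inl ⟨_, Step.handleStep hs⟩
      · exact Or.inl ⟨_, Step.handleRet⟩
      · cases hl : lookupCl o cls with
        | none => exact Or.inl ⟨_, Step.handleOpMiss hl⟩
        | some Ci => exact Or.inl ⟨_, Step.handleOpHit hl⟩

/-- Progress for the effect-annotated type system: assuming all base-type
function symbols are total on (closed, well-typed) values of their argument
type, if `⊢_E C : T` in the empty context, then either `C` reduces, or `C` is
`return V` for some value `V`, or `C` is `op(V; x.C')` with `op ∈ E`. -/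
theorem progress (S : Sig) (δ : ℕ → Val → Option Val)
    (htotal : ∀ f V, TyV S [] V (S.fnTy f).1 → (δ f V).isSome)
    {E : Finset ℕ} {C : Comp} {T : Ty}
    (hty : TyC S [] E C T) :
    (∃ C', Step δ C C') ∨ (∃ V, C = .ret V) ∨
      (∃ o V C', C = .op o V C' ∧ o ∈ E) :=
  progress_aux S δ htotal (sizeOf C + 1) C (by omega) hty
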